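/- In the SAT reduction grammar, the category [c_i] / [v_1=b_1] ⋯ / [v_n=b_n] is derivable from the category [c_{i-1}] / [v_1=b_1] ⋯ / [v_n=b_n] together with the lexicon entry for c_i if and only if the truth assignment (b_1,…,b_n) satisfies clause c_i. -/

import Mathlib

/-- Categories of VW-CCG over atomic categories coded by natural numbers.
`slash d X Y` is `X /ᵈ Y` where `d = true` is a forward slash `/` and
`d = false` is a backward slash `\`. -/
inductive Cat : Type where
  | atom : ℕ → Cat
  | slash : Bool → Cat → Cat → Cat
deriving DecidableEq

namespace Cat

/-- The target (innermost atomic category). -/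
def target : Cat → ℕ
  | atom a => a
  | slash _ X _ => X.target

/-- The argument stack of a category, bottom of the stack first. -/
def args : Cat → List (Bool × Cat)
  | atom _ => []
  | slash d X Y => X.args ++ [(d, Y)]

/-- The number of arguments of a category. -/
def numArgs (X : Cat) : ℕ := X.args.length

/-- The size (number of symbols) of a category. -/
def size : Cat → ℕ
  | atom _ => 1
  | slash _ X Y => X.size + Y.size + 1

/-- `ArgOccurs p X` holds if the slash–category pair `p` occurs as an
argument somewhere inside the category `X`. -/
def ArgOccurs (p : Bool × Cat) : Cat → Prop
  | atom _ => False
  | slash d X Y => (d, Y) = p ∨ ArgOccurs p X ∨ ArgOccurs p Y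

end Cat

/-- Build `A /₁ X₁ ⋯ /ₘ Xₘ` from a target and an argument list. -/
def Cat.mk' (t : ℕ) (as : List (Bool × Cat)) : Cat :=
  as.foldl (fun c p => Cat.slash p.1 c p.2) (Cat.atom t)

/-- Push additional arguments on the stack of a category. -/
def appendArgs (X : Cat) (zs : List (Bool × Cat)) : Cat :=
  zs.foldl (fun c p => Cat.slash p.1 c p.2) X

/-- A VW-CCG combinatory rule: a (forward or backward) combinatory schema of
degree `zRestr.length`, optionally restricting the target of the variable `X`,
the category `Y`, and the slashes and categories of the arguments
`/₁ Z₁ ⋯ /_d Z_d` of the secondary input. -/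
structure Rule where
  fwd : Bool
  tRestr : Option ℕ
  yRestr : Option Cat
  zRestr : List (Bool × Option Cat)

/-- The degree of a rule. -/
def Rule.degree (r : Rule) : ℕ := r.zRestr.length

/-- `r.Inst L R O` holds if `L R ⇛ O` is a ground instance of the rule `r`:
forward: `X/Y  Y/₁Z₁⋯/_dZ_d ⇛ X/₁Z₁⋯/_dZ_d`;
backward: `Y/₁Z₁⋯/_dZ_d  X\Y ⇛ X/₁Z₁⋯/_dZ_d`, respecting the restrictions. -/
def Rule.Inst (r : Rule) (L R O : Cat) : Prop :=
  ∃ (X Y : Cat) (zs : List (Bool × Cat)),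
    (∀ t, r.tRestr = some t → X.target = t) ∧
    (∀ Y', r.yRestr = some Y' → Y = Y') ∧
    List.Forall₂ (fun (p : Bool × Option Cat) (z : Bool × Cat) =>
      z.1 = p.1 ∧ ∀ Z, p.2 = some Z → z.2 = Z) r.zRestr zs ∧
    O = appendArgs X zs ∧
    (if r.fwd then L = Cat.slash true X Y ∧ R = appendArgs Y zs
     else R = Cat.slash false X Y ∧ L = appendArgs Y zs)

/-- A VW-CCG grammar: a finite lexicon assigning categories to vocabulary
symbols (coded by naturals) or to the empty string (`none`), a finite set of
combinatory rules, and a distinguished atomic category. -/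
structure Grammar where
  lex : List (Option ℕ × Cat)
  rules : List Rule
  start : ℕ

/-- A grammar is ε-free if no lexicon entry is for the empty string. -/
def Grammar.EpsFree (G : Grammar) : Prop := ∀ e ∈ G.lex, e.1 ≠ none

/-- Derivation trees: leaves carry lexicon entries (`none` = empty string),
internal nodes carry categories and have exactly two children. -/
inductive DTree where
  | leaf : Option ℕ → Cat → DTree
  | node : Cat → DTree → DTree → DTree

namespace DTree

/-- The category at the root. -/
def top : DTree → Cat
  | leaf _ X => X
  | node X _ _ => X

/-- The yield: left-to-right concatenation of the symbols at the leaves. -/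
def yield : DTree → List ℕ
  | leaf none _ => []
  | leaf (some σ) _ => [σ]
  | node _ l r => l.yield ++ r.yield

/-- The total number of nodes. -/
def nodes : DTree → ℕ
  | leaf _ _ => 1
  | node _ l r => l.nodes + r.nodes + 1

/-- `τ.Valid G`: `τ` is a derivation tree of the grammar `G`. -/
def Valid (G : Grammar) : DTree → Prop
  | leaf σ X => (σ, X) ∈ G.lex
  | node X l r => Valid G l ∧ Valid G r ∧ ∃ rl ∈ G.rules, rl.Inst l.top r.top X

/-- `τ.CatAt C`: the category `C` labels some node of `τ`. -/
def CatAt : DTree → Cat → Prop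
  | leaf _ X, C => C = X
  | node X l r, C => C = X ∨ l.CatAt C ∨ r.CatAt C

end DTree

/-- The language generated by a grammar. -/
def Grammar.Lang (G : Grammar) : Set (List ℕ) :=
  { w | ∃ τ : DTree, τ.Valid G ∧ τ.top = Cat.atom G.start ∧ τ.yield = w }

/-- CNF formulas: clauses are lists of literals (sign, variable index). -/
abbrev CNF := List (List (Bool × ℕ))

/-- Satisfiability of a CNF formula. -/
def CNF.Satisfiable (φ : CNF) : Prop :=
  ∃ σ : ℕ → Bool, ∀ c ∈ φ, ∃ l ∈ c, σ l.2 = l.1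

/-! Atomic categories of the SAT-reduction grammar (`m` = number of
clauses): `aCent` is `[¢]`, `aC i` is `[c_i]`, `aV m j b` is `[v_j = b]`. -/

def aCent : ℕ := 0
def aC (i : ℕ) : ℕ := 1 + i
def aV (m j : ℕ) (b : Bool) : ℕ := m + 2 + 2 * j + cond b 1 0

/-! Vocabulary symbols: `sC i` is `c_i`, `sV m j` is `v_j`, `sD m n j` is
`d_j`. -/

def sC (i : ℕ) : ℕ := i
def sV (m j : ℕ) : ℕ := m + j
def sD (m n j : ℕ) : ℕ := m + n + 1 + j

/-- The secondary-input restriction `𝟙_j` / `𝟘_j`: `n` forward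
slash–variable pairs with the `j`-th (1-based) position fixed to
`[v_j = b]`. -/
def oneHot (n m j : ℕ) (b : Bool) : List (Bool × Option Cat) :=
  (List.range n).map fun k =>
    (true, if k = j - 1 then some (Cat.atom (aV m j b)) else none)

/-- The ε-free VW-CCG grammar constructed from a CNF formula `φ` with `n`
variables in the NP-hardness reduction. -/
def satGrammar (n : ℕ) (φ : CNF) : Grammar :=
  let m := φ.length
  { lex :=
      -- c_0 := [c_0]/[¢]
      (some (sC 0), Cat.slash true (Cat.atom (aC 0)) (Cat.atom aCent)) ::
      -- c_i := [c_i]/[c_{i−1}] for 1 ≤ i ≤ m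
      (((List.range m).map fun i =>
          (some (sC (i + 1)), Cat.slash true (Cat.atom (aC (i + 1))) (Cat.atom (aC i)))) ++
       -- v_j := [¢]/[v_j=b]/[¢] for 1 ≤ j ≤ n, b ∈ {0,1}
       ((List.range n).flatMap fun j =>
          [true, false].map fun b =>
            (some (sV m (j + 1)),
              Cat.mk' aCent [(true, Cat.atom (aV m (j + 1) b)), (true, Cat.atom aCent)])) ++
       -- v_{n+1} := [¢]
       [(some (sV m (n + 1)), Cat.atom aCent)] ++
       -- d_j := [v_j=b]
       ((List.range n).flatMap fun j =>
          [true, false].map fun b => (some (sD m n (j + 1)), Cat.atom (aV m (j + 1) b))))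
    rules :=
      -- guessing: X/[¢]  [¢]/[v_j=b]/[¢] ⇒ X/[v_j=b]/[¢]
      ((List.range n).flatMap fun j =>
        [true, false].map fun b =>
          ⟨true, none, some (Cat.atom aCent),
            [(true, some (Cat.atom (aV m (j + 1) b))), (true, some (Cat.atom aCent))]⟩) ++
      -- X/[¢]  [¢] ⇒ X
      [⟨true, none, some (Cat.atom aCent), []⟩] ++
      -- clause checking: X/[c_{i−1}]  [c_{i−1}] 𝟙_j ⇒ X 𝟙_j (v_j in c_i), etc.
      ((List.range m).flatMap fun i =>
        (φ.getD i []).map fun l =>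
          ⟨true, none, some (Cat.atom (aC i)), oneHot n m l.2 l.1⟩) ++
      -- X/[v_j=b]  [v_j=b] ⇒ X
      ((List.range n).flatMap fun j =>
        [true, false].map fun b => ⟨true, none, some (Cat.atom (aV m (j + 1) b)), []⟩)
    start := aC m }

/-- The input string `w = c_m ⋯ c_1 c_0 v_1 ⋯ v_n v_{n+1} d_n ⋯ d_1` of the
reduction. -/
def wSAT (m n : ℕ) : List ℕ :=
  ((List.range (m + 1)).reverse.map sC) ++
  ((List.range (n + 1)).map fun j => sV m (j + 1)) ++
  ((List.range n).reverse.map fun j => sD m n (j + 1))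

/-!
Every rule of the reduction grammar is a forward rule whose argument `Y` is a fixed atom, and
`appendArgs Y` is injective because it just extends the argument stack. Hence a rule instance with
primary input `[c_i]/[c_{i-1}]` must be the clause-checking rule of some literal `l = (s, j)` of
`c_i`, applied to the whole stack `/[v_1=b_1] ⋯ /[v_n=b_n]`; and that stack matches the restriction
`𝟙_j` (resp. `𝟘_j`) exactly when `b_j = s`.
-/

theorem Cat.mk'_eq_appendArgs (t : ℕ) (as : List (Bool × Cat)) :
    Cat.mk' t as = appendArgs (Cat.atom t) as := rfl

theorem Cat.args_appendArgs (X : Cat) (zs : List (Bool × Cat)) :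
    (appendArgs X zs).args = X.args ++ zs := by
  induction zs generalizing X with
  | nil => simp [appendArgs]
  | cons p zs ih =>
    change (appendArgs (Cat.slash p.1 X p.2) zs).args = _
    simp [ih, Cat.args]

theorem appendArgs_right_inj {X : Cat} {zs zs' : List (Bool × Cat)} :
    appendArgs X zs = appendArgs X zs' ↔ zs = zs' := by
  refine ⟨fun h => ?_, congrArg _⟩
  simpa [Cat.args_appendArgs] using congrArg Cat.args h

/-- The relation `Rule.Inst` requires between `r.zRestr` and the arguments `zs`. -/
def ArgMatches (p : Bool × Option Cat) (z : Bool × Cat) : Prop :=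
  z.1 = p.1 ∧ ∀ Z, p.2 = some Z → z.2 = Z

theorem Rule.inst_fwd_iff {r : Rule} (hr : r.fwd = true) {X Y O : Cat}
    {zs : List (Bool × Cat)} :
    r.Inst (Cat.slash true X Y) (appendArgs Y zs) O ↔
      (∀ t, r.tRestr = some t → X.target = t) ∧ (∀ Y', r.yRestr = some Y' → Y = Y') ∧
        List.Forall₂ ArgMatches r.zRestr zs ∧ O = appendArgs X zs := by
  simp only [Rule.Inst, hr, if_true]
  constructor
  · rintro ⟨X, Y, zs', ht, hy, hz, rfl, hXY, hzs⟩
    obtain ⟨-, rfl, rfl⟩ := Cat.slash.inj hXY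
    obtain rfl := appendArgs_right_inj.mp hzs
    exact ⟨ht, hy, hz, rfl⟩
  · rintro ⟨ht, hy, hz, rfl⟩
    exact ⟨X, Y, zs, ht, hy, hz, rfl, rfl, rfl⟩

theorem aV_inj {m j : ℕ} {b b' : Bool} : aV m j b = aV m j b' ↔ b = b' := by
  cases b <;> cases b' <;> simp [aV]

theorem forall₂_oneHot_iff {n m j : ℕ} {c : Bool} {f : ℕ → Cat} (hj : 1 ≤ j) (hjn : j ≤ n) :
    List.Forall₂ ArgMatches (oneHot n m j c) ((List.range n).map fun k => (true, f k)) ↔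
      f (j - 1) = Cat.atom (aV m j c) := by
  simp only [oneHot, List.forall₂_map_left_iff, List.forall₂_map_right_iff, List.forall₂_same,
    List.mem_range, ArgMatches, true_and]
  constructor
  · exact fun h => h (j - 1) (by omega) _ (if_pos rfl)
  · intro hf k _ Z hZ
    split_ifs at hZ with hk
    · cases hZ
      rwa [hk]

/-- The clause-checking rule `X/[c_k]  [c_k] 𝟙_j ⇒ X 𝟙_j` (or `𝟘_j`) for a literal `l` of the
clause `c_{k+1}`. -/
@[simps]
def clauseRule (n m k : ℕ) (l : Bool × ℕ) : Rule :=
  ⟨true, none, some (Cat.atom (aC k)), oneHot n m l.2 l.1⟩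

theorem mem_satGrammar_rules {n : ℕ} {φ : CNF} {r : Rule} :
    r ∈ (satGrammar n φ).rules ↔
      (∃ j < n, ∃ c : Bool, r = ⟨true, none, some (Cat.atom aCent),
        [(true, some (Cat.atom (aV φ.length (j + 1) c))), (true, some (Cat.atom aCent))]⟩) ∨
      r = ⟨true, none, some (Cat.atom aCent), []⟩ ∨
      (∃ k < φ.length, ∃ l ∈ φ.getD k [], r = clauseRule n φ.length k l) ∨
      (∃ j < n, ∃ c : Bool, r = ⟨true, none, some (Cat.atom (aV φ.length (j + 1) c)), []⟩) := by
  simp only [satGrammar, List.mem_append, List.mem_flatMap, List.mem_map, List.mem_cons,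
    List.mem_range, List.not_mem_nil, or_false, clauseRule, Bool.eq_false_or_eq_true, true_and,
    eq_comm (b := r), or_assoc]

theorem satGrammar_rule_shape {n : ℕ} {φ : CNF} {r : Rule} (hr : r ∈ (satGrammar n φ).rules) :
    r.fwd = true ∧ r.tRestr = none ∧ ∃ Y, r.yRestr = some Y := by
  rcases mem_satGrammar_rules.mp hr with ⟨-, -, -, rfl⟩ | rfl | ⟨-, -, -, -, rfl⟩ | ⟨-, -, -, rfl⟩ <;>
    simp

theorem satGrammar_inst_iff {n : ℕ} {φ : CNF} {r : Rule} (hr : r ∈ (satGrammar n φ).rules)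
    {X Y : Cat} {zs : List (Bool × Cat)} :
    r.Inst (Cat.slash true X Y) (appendArgs Y zs) (appendArgs X zs) ↔
      r.yRestr = some Y ∧ List.Forall₂ ArgMatches r.zRestr zs := by
  obtain ⟨hfwd, ht, Y₀, hY₀⟩ := satGrammar_rule_shape hr
  simp [Rule.inst_fwd_iff hfwd, ht, hY₀, eq_comm]

theorem lt_length_of_mem_getD {α : Type*} {L : List (List α)} {k : ℕ} {x : α}
    (hx : x ∈ L.getD k []) : k < L.length := by
  by_contra! hk
  rw [List.getD_eq_default _ _ hk] at hx
  exact List.not_mem_nil hx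

theorem exists_mem_of_mem_getD {α : Type*} {L : List (List α)} {k : ℕ} {x : α}
    (hx : x ∈ L.getD k []) : ∃ c ∈ L, x ∈ c := by
  have hk := lt_length_of_mem_getD hx
  exact ⟨L[k], List.getElem_mem hk, by rwa [← List.getD_eq_getElem L [] hk]⟩

/-- The other rules consume `[¢]` or `[v_j = b]`, whose codes differ from `aC k` for `k ≤ m`. -/
theorem exists_satGrammar_rule_consuming_aC_iff {n : ℕ} {φ : CNF} {k : ℕ} (hk : k ≤ φ.length)
    {P : Rule → Prop} :
    (∃ r ∈ (satGrammar n φ).rules, r.yRestr = some (Cat.atom (aC k)) ∧ P r) ↔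
      ∃ l ∈ φ.getD k [], P (clauseRule n φ.length k l) := by
  constructor
  · rintro ⟨r, hr, hY, hP⟩
    rcases mem_satGrammar_rules.mp hr with
      ⟨j, -, c, rfl⟩ | rfl | ⟨k', -, l, hl, rfl⟩ | ⟨j, -, c, rfl⟩
    case inr.inr.inl =>
      obtain rfl : k' = k := by simpa [aC] using hY
      exact ⟨l, hl, hP⟩
    all_goals simp only [Option.some.injEq, Cat.atom.injEq, aCent, aV, aC] at hY; omega
  · rintro ⟨l, hl, hP⟩
    exact ⟨_, mem_satGrammar_rules.mpr (Or.inr (Or.inr (Or.inl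
      ⟨k, lt_length_of_mem_getD hl, l, hl, rfl⟩))), rfl, hP⟩

theorem clause_check_correct_general (n : ℕ) (φ : CNF) (i : ℕ) (b : ℕ → Bool)
    (h2 : i ≤ φ.length)
    (hvars : ∀ c ∈ φ, ∀ l ∈ c, 1 ≤ l.2 ∧ l.2 ≤ n) :
    (∃ r ∈ (satGrammar n φ).rules,
        r.Inst (Cat.slash true (Cat.atom (aC i)) (Cat.atom (aC (i - 1))))
          (Cat.mk' (aC (i - 1)) ((List.range n).map fun j =>
            (true, Cat.atom (aV φ.length (j + 1) (b (j + 1))))))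
          (Cat.mk' (aC i) ((List.range n).map fun j =>
            (true, Cat.atom (aV φ.length (j + 1) (b (j + 1))))))) ↔
      ∃ l ∈ φ.getD (i - 1) [], b l.2 = l.1 := by
  simp only [Cat.mk'_eq_appendArgs]
  set Z := (List.range n).map fun j => (true, Cat.atom (aV φ.length (j + 1) (b (j + 1)))) with hZ
  calc (∃ r ∈ (satGrammar n φ).rules,
          r.Inst (Cat.slash true (Cat.atom (aC i)) (Cat.atom (aC (i - 1))))
            (appendArgs (Cat.atom (aC (i - 1))) Z) (appendArgs (Cat.atom (aC i)) Z))
      ↔ ∃ r ∈ (satGrammar n φ).rules,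
          r.yRestr = some (Cat.atom (aC (i - 1))) ∧ List.Forall₂ ArgMatches r.zRestr Z :=
        exists_congr fun r => and_congr_right fun hr => satGrammar_inst_iff hr
    _ ↔ ∃ l ∈ φ.getD (i - 1) [],
          List.Forall₂ ArgMatches (clauseRule n φ.length (i - 1) l).zRestr Z :=
        exists_satGrammar_rule_consuming_aC_iff (by omega)
    _ ↔ ∃ l ∈ φ.getD (i - 1) [], b l.2 = l.1 := by
        refine exists_congr fun l => and_congr_right fun hl => ?_
        obtain ⟨c, hc, hlc⟩ := exists_mem_of_mem_getD hl
        obtain ⟨hl1, hln⟩ := hvars c hc l hlc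
        rw [clauseRule_zRestr, hZ, forall₂_oneHot_iff hl1 hln, Nat.sub_add_cancel hl1,
          Cat.atom.injEq, aV_inj]

/-- Part 2 of the SAT reduction: the category
`[c_i] / [v_1=b_1] ⋯ / [v_n=b_n]` is derivable (by a single rule of the
grammar) from `[c_{i−1}] / [v_1=b_1] ⋯ / [v_n=b_n]` together with the
lexicon category `[c_i]/[c_{i−1}]` of `c_i` if and only if the truth
assignment `(b_1, …, b_n)` satisfies clause `c_i`. -/
theorem clause_check_correct (n : ℕ) (φ : CNF) (i : ℕ) (b : ℕ → Bool)
    (h1 : 1 ≤ i) (h2 : i ≤ φ.length)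
    (hvars : ∀ c ∈ φ, ∀ l ∈ c, 1 ≤ l.2 ∧ l.2 ≤ n) :
    (∃ r ∈ (satGrammar n φ).rules,
        r.Inst (Cat.slash true (Cat.atom (aC i)) (Cat.atom (aC (i - 1))))
          (Cat.mk' (aC (i - 1)) ((List.range n).map fun j =>
            (true, Cat.atom (aV φ.length (j + 1) (b (j + 1))))))
          (Cat.mk' (aC i) ((List.range n).map fun j =>
            (true, Cat.atom (aV φ.length (j + 1) (b (j + 1))))))) ↔
      ∃ l ∈ φ.getD (i - 1) [], b l.2 = l.1 :=
  clause_check_correct_general n φ i b h2 hvars
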